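/- For A = ℤ × ℤ/2ℤ: |Hom(A, ℤ/2ℤ ≀ S₂)| / |ℤ/2ℤ ≀ S₂| = 4, while |Hom(A, S₂)|/|S₂| = 2 and χ^{(A)}(pt, ℤ/2ℤ) = |Hom(A, ℤ/2ℤ)|/2 = 2. Hence the Tamanoi-type equation fails for A = ℤ × ℤ/2ℤ: the coefficient of t² in ζ^{(A)}_{(pt,ℤ/2ℤ)}(t) is 4, but the coefficient of t² in (ζ^{(A)}_{(pt,{e})}(t))² is 5 (since ζ^{(A)}_{(pt,{e})}(t) = 1 + t + 2t² + ...). -/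

import Mathlib

open scoped BigOperators

/-- The wreath product `G ≀ S_n`, as pairs `((g₁,…,g_n), s)` with multiplication
`((g),s)((g'),s') = ((gᵢ g'_{s⁻¹(i)}), ss')`. -/
@[ext]
structure Wr (G : Type*) (n : ℕ) where
  g : Fin n → G
  s : Equiv.Perm (Fin n)

namespace Wr

variable {G : Type*} [Group G] {n : ℕ}

instance : Mul (Wr G n) :=
  ⟨fun p q => ⟨fun i => p.g i * q.g (p.s⁻¹ i), p.s * q.s⟩⟩

instance : One (Wr G n) := ⟨⟨1, 1⟩⟩

instance : Inv (Wr G n) := ⟨fun p => ⟨fun i => (p.g (p.s i))⁻¹, p.s⁻¹⟩⟩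

@[simp] lemma mul_g (p q : Wr G n) : (p * q).g = fun i => p.g i * q.g (p.s⁻¹ i) := rfl
@[simp] lemma mul_s (p q : Wr G n) : (p * q).s = p.s * q.s := rfl
@[simp] lemma one_g : (1 : Wr G n).g = 1 := rfl
@[simp] lemma one_s : (1 : Wr G n).s = 1 := rfl
@[simp] lemma inv_g (p : Wr G n) : p⁻¹.g = fun i => (p.g (p.s i))⁻¹ := rfl
@[simp] lemma inv_s (p : Wr G n) : p⁻¹.s = p.s⁻¹ := rfl

instance : Group (Wr G n) where
  mul_assoc p q t := by
    ext i
    · simp [mul_assoc, Equiv.Perm.mul_apply]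
    · simp [mul_assoc]
  one_mul p := by ext i <;> simp
  mul_one p := by ext i <;> simp
  inv_mul_cancel p := by
    ext i
    · simp
    · simp

variable {X : Type*} [MulAction G X]

/-- The action of `G ≀ S_n` on `X^n`:
`((g₁,…,g_n),s)·(x₁,…,x_n) = (g₁ x_{s⁻¹(1)},…,g_n x_{s⁻¹(n)})`. -/
instance : SMul (Wr G n) (Fin n → X) :=
  ⟨fun p x => fun i => p.g i • x (p.s⁻¹ i)⟩

@[simp] lemma smul_apply (p : Wr G n) (x : Fin n → X) (i : Fin n) :
    (p • x) i = p.g i • x (p.s⁻¹ i) := rfl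

instance : MulAction (Wr G n) (Fin n → X) where
  one_smul x := by funext i; simp
  mul_smul p q x := by
    funext i
    simp [mul_smul, Equiv.Perm.mul_apply]

end Wr

section aux

instance {G : Type*} {n : ℕ} [DecidableEq G] : DecidableEq (Wr G n) :=
  fun p q => decidable_of_iff (p.g = q.g ∧ p.s = q.s)
    ⟨fun h => by ext i <;> simp [h.1, h.2], fun h => by subst h; exact ⟨rfl, rfl⟩⟩

private def wrEquiv (G : Type*) (n : ℕ) : Wr G n ≃ (Fin n → G) × Equiv.Perm (Fin n) where
  toFun p := (p.g, p.s)
  invFun q := ⟨q.1, q.2⟩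
  left_inv _ := rfl
  right_inv _ := rfl

instance {G : Type*} {n : ℕ} [Fintype G] [DecidableEq G] : Fintype (Wr G n) :=
  Fintype.ofEquiv _ (wrEquiv G n).symm

end aux

local notation "A" => Multiplicative (ℤ × ZMod 2)

private def aGen : Multiplicative (ℤ × ZMod 2) := Multiplicative.ofAdd (1, 0)
private def bGen : Multiplicative (ℤ × ZMod 2) := Multiplicative.ofAdd (0, 1)

private lemma natCast_val2 : ∀ c : ZMod 2, ((c.val : ℕ) : ZMod 2) = c := by decide

private lemma decomp (z : Multiplicative (ℤ × ZMod 2)) :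
    z = aGen ^ (Multiplicative.toAdd z).1 * bGen ^ (Multiplicative.toAdd z).2.val := by
  apply Multiplicative.toAdd.injective
  rw [toAdd_mul, toAdd_zpow, toAdd_pow]
  ext
  · simp [aGen, bGen]
  · simp [aGen, bGen, natCast_val2]

private lemma pow_mod_two {H : Type*} [Group H] {y : H} (h : y * y = 1) (k : ℕ) :
    y ^ (k % 2) = y ^ k := by
  conv_rhs => rw [← Nat.mod_add_div k 2, pow_add, pow_mul, pow_two, h, one_pow, mul_one]

private def homEquiv (H : Type*) [Group H] :
    (Multiplicative (ℤ × ZMod 2) →* H) ≃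
      {p : H × H // p.2 * p.2 = 1 ∧ p.1 * p.2 = p.2 * p.1} where
  toFun φ := ⟨(φ aGen, φ bGen), by
    constructor
    · rw [← map_mul]
      have : bGen * bGen = 1 := by
        apply Multiplicative.toAdd.injective
        rw [toAdd_mul]; ext <;> simp [bGen]; decide
      rw [this, map_one]
    · rw [← map_mul, ← map_mul, mul_comm]⟩
  invFun p :=
    { toFun := fun z => p.1.1 ^ (Multiplicative.toAdd z).1 * p.1.2 ^ (Multiplicative.toAdd z).2.val
      map_one' := by simp
      map_mul' := by
        intro z w
        obtain ⟨⟨x, y⟩, hy, hc⟩ := p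
        simp only [toAdd_mul, Prod.fst_add, Prod.snd_add]
        have hcomm : Commute x y := hc
        rw [zpow_add, ZMod.val_add, pow_mod_two hy, pow_add]
        exact (((hcomm.zpow_left _).pow_right _).symm.mul_mul_mul_comm _ _).symm }
  left_inv φ := by
    refine MonoidHom.ext fun z => ?_
    simp only [MonoidHom.coe_mk, OneHom.coe_mk]
    conv_rhs => rw [decomp z]
    rw [map_mul, map_zpow, map_pow]
  right_inv p := by
    obtain ⟨⟨x, y⟩, hy, hc⟩ := p
    ext
    · show x ^ ((1:ℤ)) * y ^ ((0 : ZMod 2)).val = x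
      simp [ZMod.val_one]
    · show x ^ ((0:ℤ)) * y ^ ((1 : ZMod 2)).val = y
      simp [ZMod.val_one]

private lemma card_hom (H : Type*) [Group H] [Fintype H] [DecidableEq H] :
    Nat.card (Multiplicative (ℤ × ZMod 2) →* H) =
      Fintype.card {p : H × H // p.2 * p.2 = 1 ∧ p.1 * p.2 = p.2 * p.1} := by
  rw [Nat.card_congr (homEquiv H), Nat.card_eq_fintype_card]

private lemma hp0 : Nat.card (Multiplicative (ℤ × ZMod 2) →* Wr PUnit 0) = 1 := by
  rw [card_hom]; decide

private lemma hp0' : Nat.card (Wr PUnit 0) = 1 := by rw [Nat.card_eq_fintype_card]; decide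

private lemma hp1 : Nat.card (Multiplicative (ℤ × ZMod 2) →* Wr PUnit 1) = 1 := by
  rw [card_hom]; decide

private lemma hp1' : Nat.card (Wr PUnit 1) = 1 := by rw [Nat.card_eq_fintype_card]; decide

private lemma hp2 : Nat.card (Multiplicative (ℤ × ZMod 2) →* Wr PUnit 2) = 4 := by
  rw [card_hom]; decide

private lemma hp2' : Nat.card (Wr PUnit 2) = 2 := by rw [Nat.card_eq_fintype_card]; decide

private lemma hcoeff : (PowerSeries.coeff (R := ℚ) 2) ((PowerSeries.mk fun n =>
    (Nat.card (Multiplicative (ℤ × ZMod 2) →* Wr PUnit n) : ℚ) /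
      (Nat.card (Wr PUnit n) : ℚ)) ^ 2) = 5 := by
  rw [sq, PowerSeries.coeff_mul, Finset.Nat.sum_antidiagonal_eq_sum_range_succ_mk]
  rw [Finset.sum_range_succ, Finset.sum_range_succ, Finset.sum_range_one]
  simp only [PowerSeries.coeff_mk, Nat.sub_zero, Nat.sub_self, show (2:ℕ)-1 = 1 from rfl]
  rw [hp0, hp0', hp1, hp1', hp2, hp2']
  norm_num

/-- Failure of the Tamanoi-type equation for `A = ℤ × ℤ/2ℤ`:
`|Hom(A, ℤ/2ℤ ≀ S₂)|/|ℤ/2ℤ ≀ S₂| = 4`, while `|Hom(A, S₂)|/|S₂| = 2` and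
`χ^{(A)}(pt, ℤ/2ℤ) = |Hom(A, ℤ/2ℤ)|/2 = 2`; the coefficient of `t²` in
`(ζ^{(A)}_{(pt,{e})})²` is `5`, whereas the coefficient of `t²` in
`ζ^{(A)}_{(pt,ℤ/2ℤ)}` is `4`, so
`ζ^{(A)}_{(pt,ℤ/2ℤ)} ≠ (ζ^{(A)}_{(pt,{e})})^{χ^{(A)}(pt,ℤ/2ℤ)} = (ζ^{(A)}_{(pt,{e})})²`
(the trivial group being realized as `PUnit`, with `PUnit ≀ S_n ≅ S_n`). -/
theorem tamanoi_fails_for_ZxZ2 :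
    ((Nat.card (Multiplicative (ℤ × ZMod 2) →* Wr (Multiplicative (ZMod 2)) 2) : ℚ) /
        (Nat.card (Wr (Multiplicative (ZMod 2)) 2) : ℚ) = 4) ∧
    ((Nat.card (Multiplicative (ℤ × ZMod 2) →* Wr PUnit 2) : ℚ) /
        (Nat.card (Wr PUnit 2) : ℚ) = 2) ∧
    ((Nat.card (Multiplicative (ℤ × ZMod 2) →* Multiplicative (ZMod 2)) : ℚ) /
        (Nat.card (Multiplicative (ZMod 2)) : ℚ) = 2) ∧
    ((PowerSeries.coeff (R := ℚ) 2) ((PowerSeries.mk fun n =>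
        (Nat.card (Multiplicative (ℤ × ZMod 2) →* Wr PUnit n) : ℚ) /
          (Nat.card (Wr PUnit n) : ℚ)) ^ 2) = 5) ∧
    (PowerSeries.mk fun n =>
        (Nat.card (Multiplicative (ℤ × ZMod 2) →* Wr (Multiplicative (ZMod 2)) n) : ℚ) /
          (Nat.card (Wr (Multiplicative (ZMod 2)) n) : ℚ)) ≠
      (PowerSeries.mk fun n =>
        (Nat.card (Multiplicative (ℤ × ZMod 2) →* Wr PUnit n) : ℚ) /
          (Nat.card (Wr PUnit n) : ℚ)) ^ 2 := by
  have c1 : Nat.card (Multiplicative (ℤ × ZMod 2) →* Wr (Multiplicative (ZMod 2)) 2) = 32 := by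
    rw [card_hom]; decide
  have c2 : Nat.card (Wr (Multiplicative (ZMod 2)) 2) = 8 := by
    rw [Nat.card_eq_fintype_card]; decide
  have z1 : Nat.card (Multiplicative (ℤ × ZMod 2) →* Multiplicative (ZMod 2)) = 4 := by
    rw [card_hom]; decide
  have z2 : Nat.card (Multiplicative (ZMod 2)) = 2 := by
    rw [Nat.card_eq_fintype_card]; decide
  refine ⟨by rw [c1, c2]; norm_num, by rw [hp2, hp2']; norm_num, by rw [z1, z2]; norm_num,
    hcoeff, fun h => ?_⟩
  have h2 := congrArg (PowerSeries.coeff (R := ℚ) 2) h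
  rw [hcoeff, PowerSeries.coeff_mk, c1, c2] at h2
  norm_num at h2
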